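/- If two smooth unit-speed planar curves have identical signed curvature functions, they differ by a rigid motion: if γ, γ̃ : ℝ → ℝ² are unit-speed (‖γ'‖ = ‖γ̃'‖ = 1) and their signed curvatures satisfy κ(s) = κ̃(s) for all s, then there exist R ∈ SO(2) and t ∈ ℝ² with γ̃(s) = R·γ(s) + t for all s. -/

import Mathlib

open Matrix

noncomputable def det2 (u v : Fin 2 → ℝ) : ℝ := u 0 * v 1 - u 1 * v 0

def toE (v : Fin 2 → ℝ) : EuclideanSpace ℝ (Fin 2) := WithLp.toLp 2 v

/-- Signed curvature of a unit-speed planar curve. -/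
noncomputable def signedCurv (γ : ℝ → EuclideanSpace ℝ (Fin 2)) (s : ℝ) : ℝ :=
  det2 (deriv (fun t => (γ t).ofLp) s) (deriv (deriv (fun t => (γ t).ofLp)) s)

/-- Projection of a `HasDerivAt` for an `EuclideanSpace`-valued map to a component. -/
lemma hasDerivAt_comp_proj {f : ℝ → EuclideanSpace ℝ (Fin 2)} {s : ℝ}
    {v : EuclideanSpace ℝ (Fin 2)} (hf : HasDerivAt f v s) (i : Fin 2) :
    HasDerivAt (fun u => f u i) (v i) s := by
  have := (EuclideanSpace.proj i (𝕜 := ℝ)).hasFDerivAt.comp_hasDerivAt s hf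
  exact this

lemma unit_sq {v : EuclideanSpace ℝ (Fin 2)} (h : ‖v‖ = 1) : (v 0)^2 + (v 1)^2 = 1 := by
  have := congrArg (· ^ 2) h
  simp [EuclideanSpace.norm_eq, Fin.sum_univ_two, Real.sq_sqrt, Real.norm_eq_abs, sq_abs,
    add_nonneg, sq_nonneg] at this
  linarith [this]

/-- The derivative computed in the sup-norm Pi instance agrees with the Euclidean one. -/
lemma derivPi_eq (f : ℝ → EuclideanSpace ℝ (Fin 2)) (hf : Differentiable ℝ f) (s : ℝ) :
    deriv (fun t => (f t).ofLp) s = (deriv f s).ofLp := by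
  have h : HasDerivAt f (deriv f s) s := (hf s).hasDerivAt
  have h2 := ((PiLp.continuousLinearEquiv 2 ℝ (fun _ : Fin 2 => ℝ)).toContinuousLinearMap
    ).hasFDerivAt.comp_hasDerivAt s h
  exact h2.deriv

/-- Frenet equations for a unit-speed planar curve, componentwise. -/
lemma frenet (γ : ℝ → EuclideanSpace ℝ (Fin 2)) (hγ : ContDiff ℝ (⊤ : ℕ∞) γ)
    (hunit : ∀ s, ‖deriv γ s‖ = 1) (s : ℝ) :
    HasDerivAt (fun u => deriv γ u 0) (-(signedCurv γ s) * deriv γ s 1) s ∧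
    HasDerivAt (fun u => deriv γ u 1) (signedCurv γ s * deriv γ s 0) s := by
  have h1 : ContDiff ℝ ((⊤:ℕ∞) : WithTop ℕ∞) γ := hγ.of_le (by simp)
  obtain ⟨hd, hd2⟩ := contDiff_infty_iff_deriv.mp h1
  have hdd : Differentiable ℝ (deriv γ) := hd2.differentiable (by simp)
  have hT : ∀ u, HasDerivAt (deriv γ) (deriv (deriv γ) u) u := fun u => (hdd u).hasDerivAt
  set a : ℝ → ℝ := fun u => deriv γ u 0 with ha_def
  set b : ℝ → ℝ := fun u => deriv γ u 1 with hb_def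
  have ha : ∀ u, HasDerivAt a (deriv (deriv γ) u 0) u := fun u => hasDerivAt_comp_proj (hT u) 0
  have hb : ∀ u, HasDerivAt b (deriv (deriv γ) u 1) u := fun u => hasDerivAt_comp_proj (hT u) 1
  have hsq : ∀ u, a u ^ 2 + b u ^ 2 = 1 := fun u => unit_sq (hunit u)
  -- differentiate the constant a² + b² = 1
  have hzero : a s * deriv (deriv γ) s 0 + b s * deriv (deriv γ) s 1 = 0 := by
    have h2 : HasDerivAt (fun u => a u ^ 2 + b u ^ 2)
        (2 * a s ^ 1 * deriv (deriv γ) s 0 + 2 * b s ^ 1 * deriv (deriv γ) s 1) s :=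
      ((ha s).pow 2).add ((hb s).pow 2)
    have hfun : (fun u => a u ^ 2 + b u ^ 2) = fun _ => (1 : ℝ) := funext hsq
    rw [hfun] at h2
    have := h2.unique (hasDerivAt_const s (1 : ℝ))
    nlinarith [this]
  have hκ : signedCurv γ s = a s * deriv (deriv γ) s 1 - b s * deriv (deriv γ) s 0 := by
    simp only [signedCurv, det2, ha_def, hb_def]
    rw [funext (derivPi_eq γ hd), derivPi_eq (deriv γ) hdd s]
  constructor
  · have : deriv (deriv γ) s 0 = -(signedCurv γ s) * b s := by
      rw [hκ]
      linear_combination (-(deriv (deriv γ) s 0)) * hsq s + a s * hzero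
    exact this ▸ ha s
  · have : deriv (deriv γ) s 1 = signedCurv γ s * a s := by
      rw [hκ]
      linear_combination (-(deriv (deriv γ) s 1)) * hsq s + b s * hzero
    exact this ▸ hb s

theorem fundamental_theorem_plane_curves
    (γ γ' : ℝ → EuclideanSpace ℝ (Fin 2))
    (hγ : ContDiff ℝ (⊤ : ℕ∞) γ) (hγ' : ContDiff ℝ (⊤ : ℕ∞) γ')
    (hunit : ∀ s, ‖deriv γ s‖ = 1) (hunit' : ∀ s, ‖deriv γ' s‖ = 1)
    (hκ : ∀ s, signedCurv γ s = signedCurv γ' s) :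
    ∃ (R : Matrix (Fin 2) (Fin 2) ℝ) (t : EuclideanSpace ℝ (Fin 2)),
      Rᵀ * R = 1 ∧ R.det = 1 ∧ ∀ s, γ' s = toE (R.mulVec (γ s)) + t := by
  set a : ℝ → ℝ := fun u => deriv γ u 0 with ha_def
  set b : ℝ → ℝ := fun u => deriv γ u 1 with hb_def
  set c : ℝ → ℝ := fun u => deriv γ' u 0 with hc_def
  set d : ℝ → ℝ := fun u => deriv γ' u 1 with hd_def
  have hfrA := frenet γ hγ hunit
  have hfrB := frenet γ' hγ' hunit'
  have hsqA : ∀ u, a u ^ 2 + b u ^ 2 = 1 := fun u => unit_sq (hunit u)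
  have hsqB : ∀ u, c u ^ 2 + d u ^ 2 = 1 := fun u => unit_sq (hunit' u)
  -- F = ⟨T, T'⟩ and G = det(T, T') are constant
  set F : ℝ → ℝ := fun u => a u * c u + b u * d u with hF_def
  set G : ℝ → ℝ := fun u => a u * d u - b u * c u with hG_def
  have hF : ∀ u, HasDerivAt F 0 u := by
    intro u
    obtain ⟨ha', hb'⟩ := hfrA u
    obtain ⟨hc', hd'⟩ := hfrB u
    rw [← hκ u] at hc' hd'
    have := ((ha'.mul hc').add (hb'.mul hd'))
    refine this.congr_deriv ?_
    ring
  have hG : ∀ u, HasDerivAt G 0 u := by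
    intro u
    obtain ⟨ha', hb'⟩ := hfrA u
    obtain ⟨hc', hd'⟩ := hfrB u
    rw [← hκ u] at hc' hd'
    have := ((ha'.mul hd').sub (hb'.mul hc'))
    refine this.congr_deriv ?_
    ring
  have hFc : ∀ u, F u = F 0 := fun u =>
    is_const_of_deriv_eq_zero (fun x => (hF x).differentiableAt) (fun x => (hF x).deriv) u 0
  have hGc : ∀ u, G u = G 0 := fun u =>
    is_const_of_deriv_eq_zero (fun x => (hG x).differentiableAt) (fun x => (hG x).deriv) u 0
  set p : ℝ := F 0 with hp_def
  set q : ℝ := G 0 with hq_def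
  have hpq : p ^ 2 + q ^ 2 = 1 := by
    have h1 := hsqA 0
    have h2 := hsqB 0
    simp only [hp_def, hq_def, hF_def, hG_def]
    nlinarith [h1, h2]
  refine ⟨!![p, -q; q, p], γ' 0 - toE ((!![p, -q; q, p]).mulVec (γ 0)), ?_, ?_, ?_⟩
  · rw [show (!![p, -q; q, p])ᵀ = !![p, q; -q, p] from by
        ext i j; fin_cases i <;> fin_cases j <;> rfl,
      Matrix.mul_fin_two, Matrix.one_fin_two]
    ext i j
    fin_cases i <;> fin_cases j <;> simp <;> nlinarith [hpq]
  · simp [Matrix.det_fin_two_of]; nlinarith [hpq]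
  · -- tangent vectors are related by the rotation
    have htan0 : ∀ u, c u = p * a u - q * b u := by
      intro u
      have h1 : a u * c u + b u * d u = p := hFc u
      have h2 : a u * d u - b u * c u = q := hGc u
      have h3 := hsqA u
      linear_combination a u * h1 - b u * h2 - c u * h3
    have htan1 : ∀ u, d u = q * a u + p * b u := by
      intro u
      have h1 : a u * c u + b u * d u = p := hFc u
      have h2 : a u * d u - b u * c u = q := hGc u
      have h3 := hsqA u
      linear_combination b u * h1 + a u * h2 - d u * h3
    -- positions: componentwise the difference has zero derivative
    have hdA : Differentiable ℝ γ := hγ.differentiable (by simp)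
    have hdB : Differentiable ℝ γ' := hγ'.differentiable (by simp)
    have hAi : ∀ u (i : Fin 2), HasDerivAt (fun x => γ x i) (deriv γ u i) u := fun u i =>
      hasDerivAt_comp_proj (hdA u).hasDerivAt i
    have hBi : ∀ u (i : Fin 2), HasDerivAt (fun x => γ' x i) (deriv γ' u i) u := fun u i =>
      hasDerivAt_comp_proj (hdB u).hasDerivAt i
    have hpos0 : ∀ u, γ' u 0 - (p * γ u 0 - q * γ u 1) = γ' 0 0 - (p * γ 0 0 - q * γ 0 1) := by
      intro u
      have hder : ∀ x, HasDerivAt (fun y => γ' y 0 - (p * γ y 0 - q * γ y 1)) 0 x := by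
        intro x
        have := (hBi x 0).sub (((hAi x 0).const_mul p).sub ((hAi x 1).const_mul q))
        refine this.congr_deriv ?_
        have := htan0 x
        simp only [hc_def, ha_def, hb_def] at this
        linarith [this]
      exact is_const_of_deriv_eq_zero (fun x => (hder x).differentiableAt)
        (fun x => (hder x).deriv) u 0
    have hpos1 : ∀ u, γ' u 1 - (q * γ u 0 + p * γ u 1) = γ' 0 1 - (q * γ 0 0 + p * γ 0 1) := by
      intro u
      have hder : ∀ x, HasDerivAt (fun y => γ' y 1 - (q * γ y 0 + p * γ y 1)) 0 x := by
        intro x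
        have := (hBi x 1).sub (((hAi x 0).const_mul q).add ((hAi x 1).const_mul p))
        refine this.congr_deriv ?_
        have := htan1 x
        simp only [hd_def, ha_def, hb_def] at this
        linarith [this]
      exact is_const_of_deriv_eq_zero (fun x => (hder x).differentiableAt)
        (fun x => (hder x).deriv) u 0
    intro s
    ext i
    fin_cases i
    · have h := hpos0 s
      simp only [toE, Matrix.mulVec, dotProduct, Fin.sum_univ_two]
      show γ' s 0 = _
      simp [Matrix.cons_val_zero, Matrix.cons_val_one, Matrix.head_cons, Matrix.vecHead,
        Matrix.vecTail, Function.comp, PiLp.add_apply, PiLp.sub_apply]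
      linarith [h]
    · have h := hpos1 s
      simp only [toE, Matrix.mulVec, dotProduct, Fin.sum_univ_two]
      show γ' s 1 = _
      simp [Matrix.cons_val_zero, Matrix.cons_val_one, Matrix.head_cons, Matrix.vecHead,
        Matrix.vecTail, Function.comp, PiLp.add_apply, PiLp.sub_apply]
      linarith [h]
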